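/- arXiv:1908.04945 — 4 statements merged into one kernel-verified Lean document; each statement's English description precedes it below -/
import Mathlib

section
/- Let γ > 1 and g(x) = (1/(γ+1))(2γx − (γ−1))((γ−1)/(γ+1) + (2/(γ+1))(1/x))^γ. Then g'(x) > 0 for all x > 1. -/
/-!
Write `g = P · u ^ γ` with `P x = (2γx − (γ−1))/(γ+1)` the pressure ratio and
`u x = ((γ−1) + 2/x)/(γ+1)` the density ratio across the shock. In
`g' = u ^ (γ−1) · (P' u + γ P u')` the bracket collapses to the perfect square
`2γ(γ−1)(x−1)² / ((γ+1)x)²`, which is positive for `γ > 1` and `x ≠ 1`.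
-/

namespace NormalShock

noncomputable def densityRatio (γ y : ℝ) : ℝ := (γ-1)/(γ+1) + (2/(γ+1)) * (1/y)

noncomputable def pressureRatio (γ y : ℝ) : ℝ := (1/(γ+1)) * (2*γ*y - (γ-1))

variable {γ x : ℝ}

theorem densityRatio_pos (hγ : 1 ≤ γ) (hx : 0 < x) : 0 < densityRatio γ x := by
  unfold densityRatio
  have hγ1 : 0 < γ + 1 := by linarith
  have : 0 ≤ (γ-1)/(γ+1) := div_nonneg (by linarith) hγ1.le
  positivity

theorem hasDerivAt_densityRatio (hx : x ≠ 0) :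
    HasDerivAt (densityRatio γ) (2/(γ+1) * -(x^2)⁻¹) x := by
  unfold densityRatio
  simpa [one_div] using
    ((hasDerivAt_inv hx).const_mul (2/(γ+1))).const_add ((γ-1)/(γ+1))

theorem hasDerivAt_pressureRatio : HasDerivAt (pressureRatio γ) (1/(γ+1) * (2*γ)) x := by
  unfold pressureRatio
  simpa using (((hasDerivAt_id x).const_mul (2*γ)).sub_const (γ-1)).const_mul (1/(γ+1))

theorem hasDerivAt_pressureRatio_mul_densityRatio_rpow (hγ : γ + 1 ≠ 0) (hx : x ≠ 0)
    (hu : densityRatio γ x ≠ 0) :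
    HasDerivAt (fun y => pressureRatio γ y * densityRatio γ y ^ γ)
      (densityRatio γ x ^ (γ-1) * (2*γ*(γ-1)*(x-1)^2 / ((γ+1)^2 * x^2))) x := by
  refine (hasDerivAt_pressureRatio.mul
    ((hasDerivAt_densityRatio hx).rpow_const (Or.inl hu))).congr_deriv ?_
  have hsplit : densityRatio γ x ^ γ = densityRatio γ x ^ (γ-1) * densityRatio γ x := by
    rw [← Real.rpow_add_one hu, sub_add_cancel]
  rw [hsplit]
  generalize densityRatio γ x ^ (γ-1) = v
  unfold pressureRatio densityRatio
  field_simp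
  ring

end NormalShock

/-- For `γ > 1`, the entropy-jump function
`g(x) = (1/(γ+1))(2γx − (γ−1))((γ−1)/(γ+1) + (2/(γ+1))(1/x))^γ`
has strictly positive derivative for all `x > 1`. -/
theorem stmt_1 (γ : ℝ) (hγ : 1 < γ) :
    ∀ x : ℝ, 1 < x →
      0 < deriv (fun y : ℝ =>
        (1/(γ+1)) * (2*γ*y - (γ-1)) * ((γ-1)/(γ+1) + (2/(γ+1)) * (1/y)) ^ γ) x := by
  intro x hx
  have hx0 : 0 < x := by linarith
  have hu := NormalShock.densityRatio_pos hγ.le hx0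
  change 0 < deriv (fun y => NormalShock.pressureRatio γ y * NormalShock.densityRatio γ y ^ γ) x
  rw [(NormalShock.hasDerivAt_pressureRatio_mul_densityRatio_rpow (by linarith) hx0.ne'
    hu.ne').deriv]
  have hx1 : x - 1 ≠ 0 := by linarith
  have hγ0 : 0 < γ := by linarith
  have hγ1 : 0 < γ - 1 := by linarith
  positivity
end

section
/- Let γ > 1 and g(x) = (1/(γ+1))(2γx − (γ−1))((γ−1)/(γ+1) + (2/(γ+1))(1/x))^γ. Then for all x > 1, g(x) > 1. -/
/-!
Write `g(x) = (2γx - (γ-1)) ((γ-1)x + 2)^γ / ((γ+1)^(γ+1) x^γ)`. The logarithm of the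
numerator divided by `x^γ` has derivative `2γ(γ-1)(x-1)² / ((2γx-(γ-1))((γ-1)x+2)x)`,
which is positive for `x > 1`, so it is strictly increasing on `[1, ∞)`; at `x = 1` it
equals `(γ+1) log (γ+1)`, which is exactly the logarithm of the denominator's constant.
-/

open Real Set

noncomputable def logEntropyJump (γ t : ℝ) : ℝ :=
  log (2 * γ * t - (γ - 1)) + γ * log ((γ - 1) * t + 2) - γ * log t

theorem logEntropyJump_one (γ : ℝ) : logEntropyJump γ 1 = (γ + 1) * log (γ + 1) := by
  simp only [logEntropyJump, log_one]
  ring_nf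

theorem hasDerivAt_logEntropyJump {γ t : ℝ} (hA : 2 * γ * t - (γ - 1) ≠ 0)
    (hB : (γ - 1) * t + 2 ≠ 0) (ht : t ≠ 0) :
    HasDerivAt (logEntropyJump γ)
      (2 * γ * (γ - 1) * (t - 1) ^ 2 / ((2 * γ * t - (γ - 1)) * ((γ - 1) * t + 2) * t)) t := by
  have hA' : HasDerivAt (fun t => 2 * γ * t - (γ - 1)) (2 * γ) t := by
    simpa using ((hasDerivAt_id t).const_mul (2 * γ)).sub_const (γ - 1)
  have hB' : HasDerivAt (fun t => (γ - 1) * t + 2) (γ - 1) t := by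
    simpa using ((hasDerivAt_id t).const_mul (γ - 1)).add_const 2
  refine (((hA'.log hA).add ((hB'.log hB).const_mul γ)).sub
    ((hasDerivAt_log ht).const_mul γ)).congr_deriv ?_
  -- `field_simp` normalizes `(γ - 1) * t + 2` and then no longer sees `hB` as its side condition
  set B := (γ - 1) * t + 2 with hB_def
  field_simp
  rw [hB_def]
  ring

theorem strictMonoOn_logEntropyJump {γ : ℝ} (hγ : 1 < γ) :
    StrictMonoOn (logEntropyJump γ) (Ici 1) := by
  have hderiv : ∀ t ∈ Ici (1 : ℝ), HasDerivAt (logEntropyJump γ)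
      (2 * γ * (γ - 1) * (t - 1) ^ 2 / ((2 * γ * t - (γ - 1)) * ((γ - 1) * t + 2) * t)) t :=
    fun t (ht : 1 ≤ t) => hasDerivAt_logEntropyJump (by nlinarith) (by nlinarith) (by linarith)
  refine strictMonoOn_of_deriv_pos (convex_Ici 1)
    (fun t ht => (hderiv t ht).continuousAt.continuousWithinAt) fun t ht => ?_
  rw [interior_Ici] at ht
  have ht : 1 < t := ht
  rw [(hderiv t ht.le).deriv]
  have hA : 0 < 2 * γ * t - (γ - 1) := by nlinarith
  have hB : 0 < (γ - 1) * t + 2 := by nlinarith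
  have hγ' : 0 < γ - 1 := by linarith
  have ht' : 0 < t - 1 := by linarith
  positivity

theorem entropyJump_eq_exp {γ x : ℝ} (hγ : 1 < γ) (hx : 1 ≤ x) :
    (1/(γ+1)) * (2*γ*x - (γ-1)) * ((γ-1)/(γ+1) + (2/(γ+1)) * (1/x)) ^ γ
      = exp (logEntropyJump γ x - (γ + 1) * log (γ + 1)) := by
  have hγ1 : 0 < γ + 1 := by linarith
  have hx0 : 0 < x := by linarith
  have hA : 0 < 2 * γ * x - (γ - 1) := by nlinarith
  have hB : 0 < (γ - 1) * x + 2 := by nlinarith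
  have hu : (γ-1)/(γ+1) + (2/(γ+1)) * (1/x) = ((γ - 1) * x + 2) / ((γ + 1) * x) := by
    field_simp
  rw [hu, rpow_def_of_pos (by positivity), log_div hB.ne' (by positivity),
    log_mul hγ1.ne' hx0.ne', logEntropyJump]
  rw [show log (2 * γ * x - (γ - 1)) + γ * log ((γ - 1) * x + 2) - γ * log x
      - (γ + 1) * log (γ + 1)
      = -log (γ + 1) + log (2 * γ * x - (γ - 1))
        + (log ((γ - 1) * x + 2) - (log (γ + 1) + log x)) * γ by ring,
    exp_add, exp_add, exp_neg, exp_log hγ1, exp_log hA, one_div]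

/-- For `γ > 1` and the entropy-jump function `g`, one has `g(x) > 1` for all `x > 1`
(the entropy condition across a shock with supersonic upstream flow). -/
theorem stmt_2 (γ : ℝ) (hγ : 1 < γ) :
    ∀ x : ℝ, 1 < x →
      1 < (1/(γ+1)) * (2*γ*x - (γ-1)) * ((γ-1)/(γ+1) + (2/(γ+1)) * (1/x)) ^ γ := by
  intro x hx
  have hlog : (γ + 1) * log (γ + 1) < logEntropyJump γ x :=
    logEntropyJump_one γ ▸ strictMonoOn_logEntropyJump hγ self_mem_Ici hx.le hx
  rw [entropyJump_eq_exp hγ hx.le]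
  exact one_lt_exp_iff.mpr (sub_pos.mpr hlog)
end

section
/- Let γ > 1 and consider a radial solution (ρ, u, p) of the steady radial Euler system (r²ρu)' = 0, ρuu' + p' = 0, ρuB' = 0 with ρ, u, p positive and C¹. Define the Mach number M := u/√(γp/ρ). If M < 1 on the interval, then ρ' = (2ρ/r)·M²/(1 − M²) > 0, i.e., the density of a radial subsonic flow in a divergent nozzle is strictly increasing in r. -/
/-!
Mass conservation gives `ρ' u + ρ u' = -2ρu/r`, while momentum and Bernoulli together say that the
flow is isentropic, `p' = c² ρ'` with `c² = γp/ρ`. Eliminating `u'` and `p'` with the momentum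
equation `ρ u u' = -p'` leaves `ρ' (c² - u²) = 2ρu²/r`, which is the claimed formula; subsonicity
makes `c² - u² > 0`, hence `ρ' > 0`.
-/

open Set

section RadialEuler

variable {ρ u p : ℝ → ℝ} {ρ' u' p' γ r : ℝ}

theorem deriv_radial_mass_flux (hρ : HasDerivAt ρ ρ' r) (hu : HasDerivAt u u' r) :
    deriv (fun s => s ^ 2 * ρ s * u s) r = (2 * r * ρ r + r ^ 2 * ρ') * u r + r ^ 2 * ρ r * u' := by
  have hρ2 : HasDerivAt (fun s => s ^ 2 * ρ s) (2 * r * ρ r + r ^ 2 * ρ') r := by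
    have h : HasDerivAt (fun s => s ^ 2 * ρ s) _ r := (hasDerivAt_pow 2 r).mul hρ
    convert h using 1
    ring
  exact (hρ2.mul hu).deriv

theorem deriv_bernoulli (hγ : γ ≠ 1) (hρ0 : ρ r ≠ 0) (hρ : HasDerivAt ρ ρ' r)
    (hu : HasDerivAt u u' r) (hp : HasDerivAt p p' r) :
    deriv (fun s => u s ^ 2 / 2 + γ * p s / ((γ - 1) * ρ s)) r =
      u r * u' + γ * (p' * ρ r - p r * ρ') / ((γ - 1) * ρ r ^ 2) := by
  have hγ1 : γ - 1 ≠ 0 := sub_ne_zero.mpr hγ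
  have hkin : HasDerivAt (fun s => u s ^ 2 / 2) (u r * u') r := by
    have h : HasDerivAt (fun s => u s ^ 2 / 2) _ r := (hu.pow 2).div_const 2
    convert h using 1
    ring
  have h : HasDerivAt (fun s => u s ^ 2 / 2 + γ * p s / ((γ - 1) * ρ s)) _ r :=
    hkin.add ((hp.const_mul γ).div (hρ.const_mul (γ - 1)) (mul_ne_zero hγ1 hρ0))
  rw [h.deriv]
  field_simp

end RadialEuler

section EulerAlgebra

variable {ρ u p ρ' u' p' γ r : ℝ}

theorem density_mul_pressure_deriv_eq (hγ : γ ≠ 1) (hρ0 : ρ ≠ 0)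
    (hmom : ρ * u * u' + p' = 0)
    (hber : u * u' + γ * (p' * ρ - p * ρ') / ((γ - 1) * ρ ^ 2) = 0) :
    ρ * p' = γ * p * ρ' := by
  have hγ1 : γ - 1 ≠ 0 := sub_ne_zero.mpr hγ
  field_simp at hber
  linear_combination hber - (γ - 1) * ρ * hmom

theorem density_deriv_mul_sonic_gap (hr : r ≠ 0)
    (hmass : (2 * r * ρ + r ^ 2 * ρ') * u + r ^ 2 * ρ * u' = 0)
    (hmom : ρ * u * u' + p' = 0) (hisen : ρ * p' = γ * p * ρ') :
    ρ' * (γ * p - ρ * u ^ 2) * r = 2 * ρ ^ 2 * u ^ 2 := by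
  have hmass' : r * ((2 * ρ + r * ρ') * u + r * ρ * u') = 0 := by linear_combination hmass
  have hflux := (mul_eq_zero.mp hmass').resolve_left hr
  linear_combination (-ρ * u) * hflux + r * ρ * hmom - r * hisen

theorem density_deriv_eq_of_mach_sq (hr : r ≠ 0) (hγp : γ * p ≠ 0)
    {M : ℝ} (hM : M ^ 2 * (γ * p) = ρ * u ^ 2) (hM1 : M ^ 2 ≠ 1)
    (hgap : ρ' * (γ * p - ρ * u ^ 2) * r = 2 * ρ ^ 2 * u ^ 2) :
    ρ' = 2 * ρ / r * (M ^ 2 / (1 - M ^ 2)) := by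
  have h1M : 1 - M ^ 2 ≠ 0 := sub_ne_zero.mpr hM1.symm
  have h : ρ' * r * (1 - M ^ 2) * (γ * p) = 2 * ρ * M ^ 2 * (γ * p) := by
    linear_combination hgap + (-ρ' * r - 2 * ρ) * hM
  field_simp
  exact mul_right_cancel₀ hγp h

theorem mach_sq_mul_eq (hρ : 0 < ρ) (hγp : 0 < γ * p) :
    (u / Real.sqrt (γ * p / ρ)) ^ 2 * (γ * p) = ρ * u ^ 2 := by
  rw [div_pow, Real.sq_sqrt (div_pos hγp hρ).le, div_div_eq_mul_div, div_mul_cancel₀ _ hγp.ne',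
    mul_comm]

end EulerAlgebra

theorem stmt_4_general (γ : ℝ) (hγ : 1 < γ) (t r₁ : ℝ) (ht : 0 < t)
    (ρ u p ρ' u' p' : ℝ → ℝ)
    (hρ : ∀ r ∈ Ioo t r₁, HasDerivAt ρ (ρ' r) r)
    (hu : ∀ r ∈ Ioo t r₁, HasDerivAt u (u' r) r)
    (hp : ∀ r ∈ Ioo t r₁, HasDerivAt p (p' r) r)
    (hρpos : ∀ r ∈ Ioo t r₁, 0 < ρ r)
    (hupos : ∀ r ∈ Ioo t r₁, 0 < u r)
    (hppos : ∀ r ∈ Ioo t r₁, 0 < p r)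
    (hmass : ∀ r ∈ Ioo t r₁, deriv (fun s => s^2 * ρ s * u s) r = 0)
    (hmom : ∀ r ∈ Ioo t r₁, ρ r * u r * u' r + p' r = 0)
    (hber : ∀ r ∈ Ioo t r₁,
      ρ r * u r * deriv (fun s => (u s)^2/2 + γ * p s / ((γ-1) * ρ s)) r = 0)
    (hsub : ∀ r ∈ Ioo t r₁, u r / Real.sqrt (γ * p r / ρ r) < 1) :
    ∀ r ∈ Ioo t r₁,
      ρ' r = (2 * ρ r / r) *
        ((u r / Real.sqrt (γ * p r / ρ r))^2 / (1 - (u r / Real.sqrt (γ * p r / ρ r))^2)) ∧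
      0 < ρ' r := by
  intro r hr
  have hr0 : 0 < r := ht.trans hr.1
  have hρ0 := hρpos r hr
  have hu0 := hupos r hr
  have hp0 := hppos r hr
  have hγ1 : γ ≠ 1 := hγ.ne'
  have hγp : 0 < γ * p r := by positivity
  have hmass' := deriv_radial_mass_flux (hρ r hr) (hu r hr) ▸ hmass r hr
  have hber' := deriv_bernoulli hγ1 hρ0.ne' (hρ r hr) (hu r hr) (hp r hr) ▸
    (mul_eq_zero.mp (hber r hr)).resolve_left (by positivity)
  have hgap := density_deriv_mul_sonic_gap hr0.ne' hmass' (hmom r hr)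
    (density_mul_pressure_deriv_eq hγ1 hρ0.ne' (hmom r hr) hber')
  set M := u r / Real.sqrt (γ * p r / ρ r)
  have hMpos : 0 < M := div_pos hu0 (Real.sqrt_pos.mpr (by positivity))
  have hM1 : M ^ 2 < 1 := pow_lt_one₀ hMpos.le (hsub r hr) two_ne_zero
  have hformula := density_deriv_eq_of_mach_sq hr0.ne' hγp.ne' (mach_sq_mul_eq hρ0 hγp) hM1.ne
    hgap
  refine ⟨hformula, hformula ▸ ?_⟩
  have : 0 < 1 - M ^ 2 := sub_pos.mpr hM1
  positivity

/-- For a positive `C¹` radial solution of the steady radial Euler system on `(t, r₁)`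
which is subsonic (`M = u/√(γp/ρ) < 1`), the density satisfies
`ρ' = (2ρ/r)·M²/(1 − M²) > 0`; in particular the density of a radial subsonic flow in a
divergent nozzle is strictly increasing in `r`. -/
theorem stmt_4 (γ : ℝ) (hγ : 1 < γ) (t r₁ : ℝ) (ht : 0 < t) (hr : t < r₁)
    (ρ u p ρ' u' p' : ℝ → ℝ)
    (hρ : ∀ r ∈ Ioo t r₁, HasDerivAt ρ (ρ' r) r)
    (hu : ∀ r ∈ Ioo t r₁, HasDerivAt u (u' r) r)
    (hp : ∀ r ∈ Ioo t r₁, HasDerivAt p (p' r) r)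
    (hρpos : ∀ r ∈ Ioo t r₁, 0 < ρ r)
    (hupos : ∀ r ∈ Ioo t r₁, 0 < u r)
    (hppos : ∀ r ∈ Ioo t r₁, 0 < p r)
    (hmass : ∀ r ∈ Ioo t r₁, deriv (fun s => s^2 * ρ s * u s) r = 0)
    (hmom : ∀ r ∈ Ioo t r₁, ρ r * u r * u' r + p' r = 0)
    (hber : ∀ r ∈ Ioo t r₁,
      ρ r * u r * deriv (fun s => (u s)^2/2 + γ * p s / ((γ-1) * ρ s)) r = 0)
    (hsub : ∀ r ∈ Ioo t r₁, u r / Real.sqrt (γ * p r / ρ r) < 1) :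
    ∀ r ∈ Ioo t r₁,
      ρ' r = (2 * ρ r / r) *
        ((u r / Real.sqrt (γ * p r / ρ r))^2 / (1 - (u r / Real.sqrt (γ * p r / ρ r))^2)) ∧
      0 < ρ' r :=
  stmt_4_general γ hγ t r₁ ht ρ u p ρ' u' p' hρ hu hp hρpos hupos hppos hmass hmom hber hsub
end

section
/- Fix γ > 1, constants m₀ > 0, B₀ > 0, r₁ > 0. Suppose ρ > 0, u > 0, p > 0, S > 0 satisfy r₁²ρu = m₀, p = Sρ^γ, and B₀ = u²/2 + γp/((γ−1)ρ), and the flow is subsonic: u² < γp/ρ. Then p, viewed as implicitly determined by S via B₀ = (1/2)(m₀/r₁²)²(S/p)^{2/γ} + (γ/(γ−1)) p^{1−1/γ} S^{1/γ}, satisfies dp/dS < 0; i.e., at a fixed radius with fixed mass flux and Bernoulli invariant, the exit pressure of a subsonic flow is strictly decreasing in the entropy. -/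
/-!
With `k = m₀ / r₁²`, the Bernoulli function `F = bernoulliInvariant γ k` is constant along the
curve `S ↦ (S, P S)`, so `∂F/∂S + ∂F/∂p · P' = 0`. Both partial derivatives are positive:
`∂F/∂S` trivially, and `γ p · ∂F/∂p = γ p^{1-1/γ} S^{1/γ} - k² (S/p)^{2/γ}`, which for the state
`p = S ρ^γ`, `k = ρ u` equals `γ p / ρ - u²`, positive exactly in the subsonic regime.
Hence `P' < 0`.
-/

open Filter Topology

noncomputable def bernoulliInvariant (γ k S p : ℝ) : ℝ :=
  (1/2) * k^2 * (S / p) ^ (2/γ) + (γ/(γ-1)) * p ^ (1 - 1/γ) * S ^ (1/γ)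

section ImplicitDerivative

variable {γ k S p' : ℝ} {P : ℝ → ℝ}

theorem hasDerivAt_bernoulliInvariant_comp (hγ : 1 < γ) (hS : 0 < S) (hPS : 0 < P S)
    (hP : HasDerivAt P p' S) :
    HasDerivAt (fun S => bernoulliInvariant γ k S (P S))
      ((k^2 * (S / P S) ^ (2/γ) + γ/(γ-1) * (P S ^ (1 - 1/γ) * S ^ (1/γ))) / (γ * S)
        + (γ * (P S ^ (1 - 1/γ) * S ^ (1/γ)) - k^2 * (S / P S) ^ (2/γ)) / (γ * P S) * p') S := by
  have hquot : HasDerivAt (fun S => S / P S) ((1 * P S - S * p') / P S ^ 2) S :=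
    (hasDerivAt_id S).div hP hPS.ne'
  have hkinetic := (hquot.rpow_const (p := 2/γ) (Or.inl (div_pos hS hPS).ne')).const_mul
    ((1/2) * k^2)
  have henthalpy := ((hP.rpow_const (p := 1 - 1/γ) (Or.inl hPS.ne')).mul
    (Real.hasDerivAt_rpow_const (p := 1/γ) (Or.inl hS.ne'))).const_mul (γ/(γ-1))
  have hfun : (fun S => bernoulliInvariant γ k S (P S)) =
      fun S => (1/2) * k^2 * (S / P S) ^ (2/γ) + (γ/(γ-1)) * (P S ^ (1 - 1/γ) * S ^ (1/γ)) := by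
    ext S; simp only [bernoulliInvariant]; ring
  rw [hfun]
  refine (hkinetic.add henthalpy).congr_deriv ?_
  rw [Real.rpow_sub_one (div_pos hS hPS).ne', Real.rpow_sub_one hPS.ne',
    Real.rpow_sub_one hS.ne']
  have : γ - 1 ≠ 0 := (sub_pos.2 hγ).ne'
  have : γ ≠ 0 := by positivity
  field_simp
  ring

theorem neg_of_bernoulliInvariant_eventuallyEq (hγ : 1 < γ) (hS : 0 < S) (hPS : 0 < P S)
    (hP : HasDerivAt P p' S) {B : ℝ}
    (hconst : ∀ᶠ T in 𝓝 S, bernoulliInvariant γ k T (P T) = B)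
    (hsub : k^2 * (S / P S) ^ (2/γ) < γ * (P S ^ (1 - 1/γ) * S ^ (1/γ))) :
    p' < 0 := by
  have hbalance := (hasDerivAt_bernoulliInvariant_comp hγ hS hPS hP).unique
    ((hasDerivAt_const S B).congr_of_eventuallyEq hconst)
  have hdS : 0 < (k^2 * (S / P S) ^ (2/γ) + γ/(γ-1) * (P S ^ (1 - 1/γ) * S ^ (1/γ))) / (γ * S) := by
    have : 0 < γ - 1 := sub_pos.2 hγ
    positivity
  have hdp : 0 < (γ * (P S ^ (1 - 1/γ) * S ^ (1/γ)) - k^2 * (S / P S) ^ (2/γ)) / (γ * P S) :=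
    div_pos (sub_pos.2 hsub) (by positivity)
  exact neg_of_mul_neg_right (by linarith) hdp.le

end ImplicitDerivative

section IdealGasState

variable {γ S ρ : ℝ}

theorem rpow_one_div_div_mul_rpow (hγ : γ ≠ 0) (hS : 0 < S) (hρ : 0 < ρ) :
    (S / (S * ρ ^ γ)) ^ (1/γ) = ρ⁻¹ := by
  rw [div_mul_cancel_left₀ hS.ne', Real.inv_rpow (by positivity), ← Real.rpow_mul hρ.le,
    mul_one_div_cancel hγ, Real.rpow_one]

theorem rpow_two_div_div_mul_rpow (hγ : γ ≠ 0) (hS : 0 < S) (hρ : 0 < ρ) :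
    (S / (S * ρ ^ γ)) ^ (2/γ) = (ρ ^ 2)⁻¹ := by
  rw [show 2/γ = 1/γ * 2 by ring, Real.rpow_mul (by positivity),
    rpow_one_div_div_mul_rpow hγ hS hρ, Real.rpow_two, inv_pow]

theorem mul_rpow_mul_rpow_eq_div (hγ : γ ≠ 0) (hS : 0 < S) (hρ : 0 < ρ) :
    (S * ρ ^ γ) ^ (1 - 1/γ) * S ^ (1/γ) = S * ρ ^ γ / ρ := by
  have hp : 0 < S * ρ ^ γ := by positivity
  rw [Real.rpow_sub hp, Real.rpow_one, div_mul_eq_mul_div, mul_div_assoc,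
    ← Real.div_rpow hS.le hp.le, rpow_one_div_div_mul_rpow hγ hS hρ, div_eq_mul_inv]

end IdealGasState

theorem stmt_7_general (γ m₀ B₀ r₁ ρ u p₀ S₀ p' : ℝ) (P : ℝ → ℝ)
    (hγ : 1 < γ) (hr₁ : 0 < r₁)
    (hρ : 0 < ρ) (hp₀ : 0 < p₀) (hS₀ : 0 < S₀)
    (hflux : r₁^2 * ρ * u = m₀)
    (hstate : p₀ = S₀ * ρ ^ γ)
    (hsub : u^2 < γ * p₀ / ρ)
    (hP0 : P S₀ = p₀)
    (hPrel : ∀ᶠ S in nhds S₀,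
      B₀ = (1/2) * (m₀/r₁^2)^2 * (S / P S) ^ (2/γ)
            + (γ/(γ-1)) * (P S) ^ (1 - 1/γ) * S ^ (1/γ))
    (hPderiv : HasDerivAt P p' S₀) :
    p' < 0 := by
  have hγ0 : γ ≠ 0 := by positivity
  have hk : m₀ / r₁^2 = ρ * u := by
    rw [div_eq_iff (by positivity)]; linear_combination -hflux
  refine neg_of_bernoulliInvariant_eventuallyEq hγ hS₀ (hP0 ▸ hp₀) hPderiv
    (hPrel.mono fun S hS => hS.symm) ?_
  rw [hP0, hk, hstate, rpow_two_div_div_mul_rpow hγ0 hS₀ hρ, mul_rpow_mul_rpow_eq_div hγ0 hS₀ hρ,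
    ← hstate]
  calc (ρ * u)^2 * (ρ^2)⁻¹ = u^2 := by field_simp
    _ < γ * p₀ / ρ := hsub
    _ = γ * (p₀ / ρ) := mul_div_assoc _ _ _

/-- At a fixed radius `r₁` with fixed mass flux `m₀` and Bernoulli invariant `B₀`, the
pressure of a subsonic state, viewed as implicitly determined by the entropy `S` via
`B₀ = (1/2)(m₀/r₁²)²(S/p)^{2/γ} + (γ/(γ−1)) p^{1−1/γ} S^{1/γ}`, is strictly decreasing in
`S`: `dp/dS < 0`. -/
theorem stmt_7 (γ m₀ B₀ r₁ ρ u p₀ S₀ p' : ℝ) (P : ℝ → ℝ)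
    (hγ : 1 < γ) (hm₀ : 0 < m₀) (hB₀ : 0 < B₀) (hr₁ : 0 < r₁)
    (hρ : 0 < ρ) (hu : 0 < u) (hp₀ : 0 < p₀) (hS₀ : 0 < S₀)
    (hflux : r₁^2 * ρ * u = m₀)
    (hstate : p₀ = S₀ * ρ ^ γ)
    (hbern : B₀ = u^2/2 + γ*p₀/((γ-1)*ρ))
    (hsub : u^2 < γ * p₀ / ρ)
    (hP0 : P S₀ = p₀)
    (hPrel : ∀ᶠ S in nhds S₀,
      B₀ = (1/2) * (m₀/r₁^2)^2 * (S / P S) ^ (2/γ)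
            + (γ/(γ-1)) * (P S) ^ (1 - 1/γ) * S ^ (1/γ))
    (hPderiv : HasDerivAt P p' S₀) :
    p' < 0 :=
  stmt_7_general γ m₀ B₀ r₁ ρ u p₀ S₀ p' P hγ hr₁ hρ hp₀ hS₀ hflux hstate hsub hP0 hPrel hPderiv
end
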